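/- Let A be a C*-algebra and let p be a projection in the multiplier algebra M(A) of A which is full in A, i.e., the closed linear span of {x p y : x, y ∈ A} equals A. Then for every positive element a ∈ A and every ε > 0 there exist m ∈ ℕ and a positive element b ∈ M_m(A) all of whose entries lie in the hereditary C*-subalgebra p A p = {p x p : x ∈ A} ⊆ A, such that (a − ε)₊, identified with diag((a − ε)₊, 0, …, 0) ∈ M_m(A), is Cuntz subequivalent to b in M_m(A). -/

import Mathlib

open Filter Topology MultiplierAlgebra

variable {A : Type*} [NonUnitalCStarAlgebra A] [PartialOrder A] [StarOrderedRing A]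

/-- `(a - ε)₊`, the positive cut-down of `a`. -/
noncomputable def cutdown (a : A) (ε : ℝ) : A :=
  cfcₙ (fun t : ℝ => max (t - ε) 0) a

/-- Cuntz subequivalence in the matrix algebra `Mₙ(A)`: there is a sequence `(w k)` of
matrices with `w k * b * (w k)⋆ → a`.  (Since all C*-norms on `Mₙ(A)` are equivalent to
the product topology, this is norm convergence.) -/
def CuntzLEM {n : ℕ} (a b : Matrix (Fin n) (Fin n) A) : Prop :=
  ∃ w : ℕ → Matrix (Fin n) (Fin n) A,
    Tendsto (fun k => w k * b * star (w k)) atTop (𝓝 a)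

/-- Membership in the hereditary corner `p A p` of `A`, for a projection `p` in the
multiplier algebra `𝓜(ℂ, A)`. -/
def InCorner (p : 𝓜(ℂ, A)) (z : A) : Prop :=
  ∃ x : A, (z : 𝓜(ℂ, A)) = p * (x : 𝓜(ℂ, A)) * p

/-!
Write `q = (a - ε/2)₊ = g⋆g`. Fullness of `p` lets us approximate `g` by a finite sum
`z = ∑ⱼ (xⱼ p) yⱼ`, so that `‖q - z⋆z‖ < ε/4`, and a Kirchberg–Rørdam perturbation argument
gives `(a - ε)₊ = (q - ε/2)₊ ≤ d (z⋆z) d`, hence `(a - ε)₊ ≾ z⋆z`. In matrices, `z` is the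
product `V Y` of the row `V = (xⱼ p)ⱼ` and the column `Y = (yⱼ)ⱼ`, so `diag(z⋆z, 0, …) = Y⋆ (V⋆V) Y`
with `V⋆V = (p xᵢ⋆ xⱼ p)ᵢⱼ` a positive matrix over the corner `p A p`.
-/

namespace DoubleCentralizer

variable {B : Type*} [NonUnitalCStarAlgebra B]

theorem coe_injective : Function.Injective ((↑) : B → 𝓜(ℂ, B)) := fun _ _ h =>
  (ContinuousLinearMap.isometry_mul ℂ B).injective congr(($h).fst)

theorem snd_mul (T : 𝓜(ℂ, B)) (x y : B) : T.snd (x * y) = x * T.snd y := by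
  set D := T.snd (x * y) - x * T.snd y
  have hD : ∀ w, D * w = 0 := fun w => by
    simp only [D, sub_mul, T.central, mul_assoc, sub_self]
  exact sub_eq_zero.mp <| (CStarRing.mul_star_self_eq_zero_iff D).mp (hD (star D))

theorem coe_snd_apply (T : 𝓜(ℂ, B)) (x : B) : ((T.snd x : B) : 𝓜(ℂ, B)) = x * T := by
  ext y
  · exact T.central x y
  · exact (T.snd_mul y x).symm

end DoubleCentralizer

namespace Matrix

variable {R : Type*} {n : Type*} [DecidableEq n]

theorem continuous_single [Zero R] [TopologicalSpace R] (i j : n) :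
    Continuous (single i j : R → Matrix n n R) :=
  continuous_pi fun _ => continuous_pi fun _ => by
    simp only [single_apply]
    exact (continuous_id (X := R)).if_const _ (continuous_const (y := 0))

variable [NonUnitalSemiring R] [StarRing R]

theorem star_single (i j : n) (a : R) : star (single i j a) = single j i (star a) := by
  rw [star_eq_conjTranspose, conjTranspose_single]

theorem star_updateRow_zero_mul_self_apply [Fintype n] (i : n) (v : n → R) (k l : n) :
    (star ((0 : Matrix n n R).updateRow i v) * (0 : Matrix n n R).updateRow i v) k l
      = star (v k) * v l := by
  simp [mul_apply, updateRow_apply, star_apply]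

end Matrix

section CuntzLE

variable {R : Type*} [NonUnitalSemiring R] [StarRing R] [TopologicalSpace R]

def CuntzLE (a b : R) : Prop :=
  ∃ u : ℕ → R, Tendsto (fun n => u n * b * star (u n)) atTop (𝓝 a)

theorem CuntzLE.of_conj {a b w : R} (h : CuntzLE a (w * b * star w)) : CuntzLE a b := by
  obtain ⟨u, hu⟩ := h
  refine ⟨fun n => u n * w, ?_⟩
  simpa only [star_mul, mul_assoc] using hu

theorem CuntzLE.matrix_single {n : Type*} [Fintype n] [DecidableEq n] {a b : R}
    (h : CuntzLE a b) (i : n) : CuntzLE (Matrix.single i i a) (Matrix.single i i b) := by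
  obtain ⟨u, hu⟩ := h
  refine ⟨fun k => Matrix.single i i (u k), ?_⟩
  simpa [Function.comp_def, Matrix.star_single, Matrix.single_mul_single_same]
    using ((Matrix.continuous_single i i).tendsto a).comp hu

theorem CuntzLE.matrix_single_updateRow {n : Type*} [Fintype n] [DecidableEq n] {e : R}
    {v y : n → R} (h : CuntzLE e (star (v ⬝ᵥ y) * (v ⬝ᵥ y))) (i : n) :
    CuntzLE (Matrix.single i i e)
      (star ((0 : Matrix n n R).updateRow i v) * (0 : Matrix n n R).updateRow i v) := by
  set V := (0 : Matrix n n R).updateRow i v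
  set Y := (0 : Matrix n n R).updateCol i y
  have hconj : star Y * (star V * V) * star (star Y)
      = Matrix.single i i (star (v ⬝ᵥ y) * (v ⬝ᵥ y)) :=
    calc star Y * (star V * V) * star (star Y) = star (V * Y) * (V * Y) := by
          simp only [star_star, star_mul, mul_assoc]
      _ = star (Matrix.single i i (v ⬝ᵥ y)) * Matrix.single i i (v ⬝ᵥ y) := by
          rw [Matrix.updateRow_zero_mul_updateCol_zero]
      _ = _ := by rw [Matrix.star_single, Matrix.single_mul_single_same]
  refine CuntzLE.of_conj (w := star Y) ?_
  rw [hconj]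
  exact h.matrix_single i

end CuntzLE

section FunctionalCalculus

variable {B : Type*} [NonUnitalCStarAlgebra B]

theorem cfcₙ_mul_mul_cfcₙ {x : B} (hx : IsSelfAdjoint x) {f : ℝ → ℝ} (hf : Continuous f)
    (hf0 : f 0 = 0) : cfcₙ f x * x * cfcₙ f x = cfcₙ (fun t => f t * t * f t) x := by
  rw [cfcₙ_mul (fun t => f t * t) f x, cfcₙ_mul f (fun t => t) x, cfcₙ_id' ℝ x]

theorem cutdown_cutdown {a : B} (ha : IsSelfAdjoint a) {s t : ℝ} (hs : 0 ≤ s) (ht : 0 ≤ t) :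
    cutdown (cutdown a s) t = cutdown a (s + t) := by
  rw [cutdown, cutdown, cutdown, ← cfcₙ_comp (fun u : ℝ => max (u - t) 0) _ a
    (by fun_prop) (by simpa using ht) (by fun_prop) (by simpa using hs)]
  refine cfcₙ_congr fun u _ => ?_
  simp only [Function.comp_apply]
  grind

end FunctionalCalculus

/-- Approximates `t ^ (-1/2)` as `σ → 0` while vanishing at `0`, so that it can be applied
through the non-unital functional calculus. -/
noncomputable def invSqrtApprox (σ t : ℝ) : ℝ := √(max t 0) / (max t 0 + σ)

theorem continuous_invSqrtApprox {σ : ℝ} (hσ : 0 < σ) : Continuous (invSqrtApprox σ) :=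
  Continuous.div (by fun_prop) (by fun_prop) fun t => by positivity

theorem invSqrtApprox_zero (σ : ℝ) : invSqrtApprox σ 0 = 0 := by
  simp [invSqrtApprox]

theorem invSqrtApprox_mul_mul_self {σ t : ℝ} (ht : 0 ≤ t) :
    invSqrtApprox σ t * t * invSqrtApprox σ t = (t / (t + σ)) ^ 2 := by
  rw [invSqrtApprox, max_eq_left ht]
  linear_combination t * (t + σ)⁻¹ ^ 2 * Real.mul_self_sqrt ht

theorem one_sub_div_add_sq_mul_le {σ t : ℝ} (hσ : 0 < σ) (ht : 0 ≤ t) :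
    (1 - (t / (t + σ)) ^ 2) * t ≤ 2 * σ := by
  rw [div_pow, one_sub_div (by positivity), div_mul_eq_mul_div, div_le_iff₀ (by positivity)]
  nlinarith [mul_nonneg hσ.le ht, mul_nonneg (mul_nonneg hσ.le hσ.le) ht]

section Unital

variable {B : Type*} [CStarAlgebra B]

theorem cfc_mul_mul_cfc {x : B} (hx : IsSelfAdjoint x) {f : ℝ → ℝ} (hf : Continuous f) :
    cfc f x * x * cfc f x = cfc (fun t => f t * t * f t) x := by
  rw [cfc_mul (fun t => f t * t) f x, cfc_mul f (fun t => t) x, cfc_id' ℝ x]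

theorem norm_conj_cfc_sub_le_of_le [PartialOrder B] [StarOrderedRing B] {e x r : B} (hex : e ≤ x) (hr : IsSelfAdjoint r)
    (hre : r * r = e) {ψ : ℝ → ℝ} (hψ : Continuous ψ) {c : ℝ}
    (hψ_le : ∀ t, 0 ≤ t → ψ t ≤ 1) (hψ_bound : ∀ t, 0 ≤ t → (1 - ψ t) * t ≤ c) :
    ‖r * cfc ψ x * r - e‖ ≤ c := by
  have he : 0 ≤ e := hre ▸ hr.mul_self_nonneg
  have hx : 0 ≤ x := he.trans hex
  have hspec : ∀ t ∈ spectrum ℝ x, 0 ≤ t := fun t ht => spectrum_nonneg_of_nonneg hx ht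
  set ρ := cfc (fun t => √(1 - ψ t)) x
  have hρ : IsSelfAdjoint ρ := cfc_predicate _ x
  have hρρ : ρ * ρ = 1 - cfc ψ x := by
    rw [← cfc_mul .., ← cfc_one ℝ x, ← cfc_sub ..]
    exact cfc_congr fun t ht => Real.mul_self_sqrt (sub_nonneg.mpr (hψ_le t (hspec t ht)))
  have hρxρ : ρ * x * ρ = cfc (fun t => (1 - ψ t) * t) x := by
    rw [cfc_mul_mul_cfc hx.isSelfAdjoint (by fun_prop)]
    refine cfc_congr fun t ht => ?_
    have := Real.mul_self_sqrt (sub_nonneg.mpr (hψ_le t (hspec t ht)))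
    linear_combination t * this
  calc ‖r * cfc ψ x * r - e‖ = ‖star (ρ * r) * (ρ * r)‖ := by
        rw [← norm_neg, star_mul, hρ.star_eq, hr.star_eq, ← hre]
        congr 1
        rw [show r * ρ * (ρ * r) = r * (ρ * ρ) * r by noncomm_ring, hρρ]
        noncomm_ring
    _ = ‖ρ * e * ρ‖ := by
        rw [CStarRing.norm_star_mul_self, ← CStarRing.norm_self_mul_star, star_mul, hρ.star_eq,
          hr.star_eq, ← hre]
        noncomm_ring
    _ ≤ ‖ρ * x * ρ‖ :=
        CStarAlgebra.norm_le_norm_of_nonneg_of_le (hρ.conjugate_nonneg he)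
          (hρ.conjugate_le_conjugate hex)
    _ ≤ c := by
        rw [hρxρ]
        refine norm_cfc_le (by simpa using hψ_bound 0 le_rfl) fun t ht => ?_
        have ht0 := hspec t ht
        rw [Real.norm_of_nonneg (mul_nonneg (sub_nonneg.mpr (hψ_le t ht0)) ht0)]
        exact hψ_bound t ht0

end Unital

section Order

variable {B : Type*} [NonUnitalCStarAlgebra B] [PartialOrder B] [StarOrderedRing B]

theorem norm_conj_cfcₙ_sub_le_of_le {e x r : B} (hex : e ≤ x) (hr : IsSelfAdjoint r)
    (hre : r * r = e) {ψ : ℝ → ℝ} (hψ : Continuous ψ) (hψ0 : ψ 0 = 0) {c : ℝ}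
    (hψ_le : ∀ t, 0 ≤ t → ψ t ≤ 1) (hψ_bound : ∀ t, 0 ≤ t → (1 - ψ t) * t ≤ c) :
    ‖r * cfcₙ ψ x * r - e‖ ≤ c := by
  rw [← Unitization.norm_inr (𝕜 := ℂ), Unitization.inr_sub, Unitization.inr_mul,
    Unitization.inr_mul, Unitization.real_cfcₙ_eq_cfc_inr x ψ hψ0]
  have he : 0 ≤ e := hre ▸ hr.mul_self_nonneg
  have hex' : (e : Unitization ℂ B) ≤ x :=
    (Unitization.inr_le_iff e x he.isSelfAdjoint (he.trans hex).isSelfAdjoint).mpr hex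
  exact norm_conj_cfc_sub_le_of_le hex' (hr.inr ℂ) (by rw [← Unitization.inr_mul, hre]) hψ
    hψ_le hψ_bound

theorem CuntzLE.of_le {e x : B} (he : 0 ≤ e) (hex : e ≤ x) : CuntzLE e x := by
  set r := CFC.sqrt e
  have hr : IsSelfAdjoint r := (CFC.sqrt_nonneg e).isSelfAdjoint
  have hx : IsSelfAdjoint x := (he.trans hex).isSelfAdjoint
  set σ : ℕ → ℝ := fun n => 1 / (n + 1)
  have hσ : ∀ n, 0 < σ n := fun n => by positivity
  set G : ℕ → B := fun n => cfcₙ (invSqrtApprox (σ n)) x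
  have hbound : ∀ n, ‖r * G n * x * star (r * G n) - e‖ ≤ 2 * σ n := by
    intro n
    have hcont := continuous_invSqrtApprox (hσ n)
    rw [star_mul, hr.star_eq, (cfcₙ_predicate _ x : IsSelfAdjoint (G n)).star_eq,
      show r * G n * x * (G n * r) = r * (G n * x * G n) * r by noncomm_ring,
      cfcₙ_mul_mul_cfcₙ hx hcont (invSqrtApprox_zero _)]
    refine norm_conj_cfcₙ_sub_le_of_le hex hr (CFC.sqrt_mul_sqrt_self e he) (by fun_prop)
      (by simp [invSqrtApprox_zero]) (fun t ht => ?_) (fun t ht => ?_)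
    · rw [invSqrtApprox_mul_mul_self ht]
      exact pow_le_one₀ (by positivity) (div_le_one_of_le₀ (by linarith [hσ n]) (by positivity))
    · rw [invSqrtApprox_mul_mul_self ht]
      exact one_sub_div_add_sq_mul_le (hσ n) ht
  refine ⟨fun n => r * G n, tendsto_iff_norm_sub_tendsto_zero.mpr ?_⟩
  refine squeeze_zero (fun n => norm_nonneg _) hbound ?_
  simpa [σ] using (tendsto_one_div_add_atTop_nhds_zero_nat (𝕜 := ℝ)).const_mul 2

theorem cutdown_nonneg (a : B) (ε : ℝ) : 0 ≤ cutdown a ε :=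
  cfcₙ_nonneg fun _ _ => le_max_right _ _

theorem exists_cutdown_le_conj {q c : B} (hq : IsSelfAdjoint q) (hc : IsSelfAdjoint c)
    {δ η : ℝ} (hδη : δ < η) (hqc : ‖q - c‖ ≤ δ) :
    ∃ d : B, IsSelfAdjoint d ∧ cutdown q η ≤ d * c * d := by
  -- `d` is chosen so that `d q d = (q - η)₊ + δ d²`, while `d (q - c) d ≤ δ d²`.
  set h : ℝ → ℝ := fun s => max (s - η) 0 / max (s - δ) (η - δ)
  have hden : ∀ s, 0 < max (s - δ) (η - δ) := fun s => lt_max_of_lt_right (by linarith)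
  have h_nonneg : ∀ s, 0 ≤ h s := fun s => div_nonneg (le_max_right _ _) (hden s).le
  have h_cont : Continuous h := Continuous.div (by fun_prop) (by fun_prop) fun s => (hden s).ne'
  have h_mul : ∀ s, h s * s = max (s - η) 0 + δ * h s := fun s => by
    rcases le_total s η with hs | hs
    · simp [h, max_eq_right (sub_nonpos.mpr hs)]
    · have : s - δ ≠ 0 := (by linarith : 0 < s - δ).ne'
      simp only [h]
      rw [max_eq_left (sub_nonneg.mpr hs), max_eq_left (by linarith : η - δ ≤ s - δ)]
      field_simp
      ring
  have hη : 0 < η := (norm_nonneg _).trans_lt (hqc.trans_lt hδη)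
  have h0 : h 0 = 0 := by simp [h, hη.le]
  set d := cfcₙ (fun s => √(h s)) q
  have hd : IsSelfAdjoint d := cfcₙ_predicate _ q
  have hdd : d * d = cfcₙ h q := by
    rw [← cfcₙ_mul _ _ q h_cont.sqrt.continuousOn (by simp [h0]) h_cont.sqrt.continuousOn
      (by simp [h0])]
    exact cfcₙ_congr fun s _ => Real.mul_self_sqrt (h_nonneg s)
  have hdqd : d * q * d = cutdown q η + δ • (d * d) := by
    rw [cfcₙ_mul_mul_cfcₙ hq h_cont.sqrt (by simp [h0]), hdd, cutdown,
      ← cfcₙ_smul δ h q h_cont.continuousOn h0, ← cfcₙ_add _ (fun s => δ • h s) q (by fun_prop)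
      (by simpa using hη.le) (h_cont.const_smul δ).continuousOn (by simp [h0])]
    refine cfcₙ_congr fun s _ => ?_
    rw [mul_right_comm, Real.mul_self_sqrt (h_nonneg s), h_mul, smul_eq_mul]
  have hconj : d * (q - c) * d ≤ δ • (d * d) := by
    have := CStarAlgebra.star_left_conjugate_le_norm_smul (a := d) (hq.sub hc)
    rw [hd.star_eq] at this
    exact this.trans (smul_le_smul_of_nonneg_right hqc hd.mul_self_nonneg)
  refine ⟨d, hd, ?_⟩
  rw [mul_sub, sub_mul, hdqd, add_sub_right_comm, add_le_iff_nonpos_left, sub_nonpos] at hconj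
  exact hconj

theorem cuntzLE_cutdown_of_norm_sub_le {q c : B} (hq : IsSelfAdjoint q) (hc : 0 ≤ c)
    {δ η : ℝ} (hδη : δ < η) (hqc : ‖q - c‖ ≤ δ) : CuntzLE (cutdown q η) c := by
  obtain ⟨d, hd, hle⟩ := exists_cutdown_le_conj hq hc.isSelfAdjoint hδη hqc
  refine .of_conj (w := d) ?_
  rw [hd.star_eq]
  exact .of_le (cutdown_nonneg q η) hle

end Order

theorem Dense.exists_norm_star_mul_self_sub_lt {E : Type*} [NonUnitalNormedRing E] [StarRing E]
    [ContinuousStar E] {D : Set E} (hD : Dense D) (g : E) {δ : ℝ} (hδ : 0 < δ) :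
    ∃ z ∈ D, ‖star g * g - star z * z‖ < δ := by
  have hU : {z : E | ‖star g * g - star z * z‖ < δ} ∈ 𝓝 g := by
    have hc : Continuous fun z : E => star z * z := continuous_star.mul continuous_id
    simpa [Metric.ball, dist_eq_norm'] using
      hc.continuousAt.preimage_mem_nhds (Metric.ball_mem_nhds (star g * g) hδ)
  obtain ⟨z, hzU, hzD⟩ := hD.inter_nhds_nonempty hU
  exact ⟨z, hzU, hzD⟩

section Corner

variable {B : Type*} [NonUnitalCStarAlgebra B]

open DoubleCentralizer in
theorem exists_dotProduct_of_mem_span {p : 𝓜(ℂ, B)} {z : B}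
    (hz : z ∈ Submodule.span ℂ
      {z : B | ∃ x y : B, (z : 𝓜(ℂ, B)) = (x : 𝓜(ℂ, B)) * p * (y : 𝓜(ℂ, B))}) :
    ∃ (n : ℕ) (x y : Fin (n + 1) → B), z = (fun j => p.snd (x j)) ⬝ᵥ y := by
  obtain ⟨n, f, g, rfl⟩ := Submodule.mem_span_set'.mp hz
  choose x y hxy using fun i => (g i).2
  refine ⟨n, Fin.cons 0 fun i => f i • x i, Fin.cons 0 y, ?_⟩
  rw [dotProduct, Fin.sum_univ_succ]
  simp only [Fin.cons_zero, Fin.cons_succ, map_zero, zero_mul, zero_add]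
  refine Finset.sum_congr rfl fun i _ => coe_injective (B := B) ?_
  change coeHom (f i • (g i : B)) = coeHom (p.snd (f i • x i) * y i)
  simp only [map_smul, map_mul, coeHom_apply, hxy, coe_snd_apply, smul_mul_assoc]

theorem inCorner_star_snd_mul_snd {p : 𝓜(ℂ, B)} (hp : star p = p) (x y : B) :
    InCorner p (star (p.snd x) * p.snd y) := by
  refine ⟨star x * y, ?_⟩
  change DoubleCentralizer.coeHom (star (p.snd x) * p.snd y)
    = p * DoubleCentralizer.coeHom (star x * y) * p
  simp only [map_mul, map_star, DoubleCentralizer.coeHom_apply,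
    DoubleCentralizer.coe_snd_apply, star_mul, hp, mul_assoc]

end Corner

theorem cutdown_cuntzLE_matrix_over_corner_general
    (p : 𝓜(ℂ, A)) (hp_star : star p = p)
    (hfull : closure (Submodule.span ℂ
        {z : A | ∃ x y : A,
          (z : 𝓜(ℂ, A)) = (x : 𝓜(ℂ, A)) * p * (y : 𝓜(ℂ, A))} : Set A) = Set.univ)
    (a : A) (ha : 0 ≤ a) (ε : ℝ) (hε : 0 < ε) :
    ∃ (m : ℕ) (b : Matrix (Fin (m + 1)) (Fin (m + 1)) A),
      (∃ v : Matrix (Fin (m + 1)) (Fin (m + 1)) A, b = star v * v) ∧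
      (∀ i j, InCorner p (b i j)) ∧
      CuntzLEM (Matrix.diagonal fun i => if i = 0 then cutdown a ε else 0) b := by
  set q := cutdown a (ε / 2)
  obtain ⟨z, hz_span, hqz⟩ := (dense_iff_closure_eq.mpr hfull).exists_norm_star_mul_self_sub_lt
    (CFC.sqrt q) (by positivity : 0 < ε / 4)
  rw [(CFC.sqrt_nonneg q).isSelfAdjoint.star_eq, CFC.sqrt_mul_sqrt_self q (cutdown_nonneg a _)]
    at hqz
  have hcut : CuntzLE (cutdown a ε) (star z * z) := by
    have := cuntzLE_cutdown_of_norm_sub_le (cutdown_nonneg a _).isSelfAdjoint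
      (star_mul_self_nonneg z) (by linarith : ε / 4 < ε / 2) hqz.le
    rwa [cutdown_cutdown ha.isSelfAdjoint (by positivity) (by positivity), add_halves] at this
  obtain ⟨n, x, y, rfl⟩ := exists_dotProduct_of_mem_span hz_span
  refine ⟨n, _, ⟨(0 : Matrix _ _ A).updateRow 0 fun j => p.snd (x j), rfl⟩, fun i j => ?_, ?_⟩
  · rw [Matrix.star_updateRow_zero_mul_self_apply]
    exact inCorner_star_snd_mul_snd hp_star (x i) (x j)
  · have hdiag : (fun i : Fin (n + 1) => if i = 0 then cutdown a ε else 0)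
        = Pi.single 0 (cutdown a ε) := funext fun i => (Pi.single_apply 0 _ i).symm
    rw [hdiag, Matrix.diagonal_single]
    exact hcut.matrix_single_updateRow 0

/-- Let `p` be a full projection in the multiplier algebra of `A`,
i.e. the closed linear span of `{x p y : x, y ∈ A}` is all of `A`.  Then for every
positive `a ∈ A` and every `ε > 0` there are `m ≥ 1` and a positive matrix
`b ∈ M_m(A)` all of whose entries lie in the corner `p A p`, such that
`diag((a - ε)₊, 0, …, 0) ≾ b` in `M_m(A)`. -/
theorem cutdown_cuntzLE_matrix_over_corner
    (p : 𝓜(ℂ, A)) (hp_star : star p = p) (hp_idem : p * p = p)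
    (hfull : closure (Submodule.span ℂ
        {z : A | ∃ x y : A,
          (z : 𝓜(ℂ, A)) = (x : 𝓜(ℂ, A)) * p * (y : 𝓜(ℂ, A))} : Set A) = Set.univ)
    (a : A) (ha : 0 ≤ a) (ε : ℝ) (hε : 0 < ε) :
    ∃ (m : ℕ) (b : Matrix (Fin (m + 1)) (Fin (m + 1)) A),
      (∃ v : Matrix (Fin (m + 1)) (Fin (m + 1)) A, b = star v * v) ∧
      (∀ i j, InCorner p (b i j)) ∧
      CuntzLEM (Matrix.diagonal fun i => if i = 0 then cutdown a ε else 0) b :=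
  cutdown_cuntzLE_matrix_over_corner_general p hp_star hfull a ha ε hε
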